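/- Let p > 1, a ∈ ℝ, and let v be the positive blow-up solution of v'' = |v|^{p-1}v log^a(2+v²) with blow-up time T. Then log(v(t)²+2) ∼ −(4/(p−1)) log(T−t) as t → T. -/

import Mathlib

/-!
Multiplying the equation by `v'` gives the energy identity
`v'(t)² = v'(0)² + 2 ∫_{v(0)}^{v(t)} f`, and since `f(s) = s^p log^a (2 + s²)` lies between
`s^(p-ε)` and `s^(p+ε)` for large `s`, the energy grows like `v^(p+1±ε)`. Hence near `T`,
`v^(1+1/σ) ≤ v'` for every `σ > 2/(p-1)` and `v' ≤ v^(1+1/σ)` for every `σ < 2/(p-1)`.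
Comparing `v^(-1/σ)` with the profile `(T-t)/σ` of the model equation `v' = v^(1+1/σ)`, which
blows up exactly at `T`, gives `log v(t) ≤ σ (log σ - log (T-t))`, resp. `≥`. Letting
`σ → 2/(p-1)` yields `log v(t) ∼ -(2/(p-1)) log (T-t)`, and `log (v² + 2) ∼ 2 log v`.
-/

open Real Set Filter Topology

lemma eventually_mul_rpow_add_le_mul_rpow {r s c : ℝ} (C D : ℝ) (hc : 0 < c) (hr : 0 < r)
    (hsr : s < r) : ∀ᶠ x in atTop, C * x ^ s + D ≤ c * x ^ r := by
  have hsmall : Tendsto (fun x : ℝ => C * x ^ (s - r)) atTop (𝓝 0) := by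
    simpa [neg_sub] using (tendsto_rpow_neg_atTop (sub_pos.2 hsr)).const_mul C
  have hlarge : Tendsto (fun x : ℝ => c / 2 * x ^ r) atTop atTop :=
    (tendsto_rpow_atTop hr).const_mul_atTop (half_pos hc)
  filter_upwards [hsmall.eventually (gt_mem_nhds (half_pos hc)), hlarge.eventually_ge_atTop D,
    eventually_gt_atTop 0] with x hCx hDx hx
  have hsplit : x ^ s = x ^ (s - r) * x ^ r := by rw [← rpow_add hx, sub_add_cancel]
  have hxr : 0 < x ^ r := rpow_pos_of_pos hx r
  rw [hsplit]
  nlinarith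

lemma eventually_log_two_add_sq_rpow_le (b : ℝ) {ε : ℝ} (hε : 0 < ε) :
    ∀ᶠ s in atTop, log (2 + s ^ 2) ^ b ≤ s ^ ε := by
  have harg : Tendsto (fun s : ℝ => 2 + s ^ 2) atTop atTop :=
    tendsto_atTop_add_const_left _ _ (tendsto_pow_atTop two_ne_zero)
  filter_upwards [((isLittleO_log_rpow_rpow_atTop b (by positivity : 0 < ε / 4)).comp_tendsto
    harg).bound one_pos, eventually_ge_atTop 2] with s hlo hs
  have hbase : 2 + s ^ 2 ≤ s ^ (4 : ℝ) := by
    rw [show (4 : ℝ) = (4 : ℕ) by norm_num, rpow_natCast]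
    nlinarith [mul_le_mul hs hs (by norm_num) (by linarith)]
  calc log (2 + s ^ 2) ^ b ≤ ‖log (2 + s ^ 2) ^ b‖ := le_norm_self _
    _ ≤ (2 + s ^ 2) ^ (ε / 4) := by
      simpa [Function.comp_def, abs_of_pos (by positivity : (0 : ℝ) < (2 + s ^ 2) ^ (ε / 4))]
        using hlo
    _ ≤ (s ^ (4 : ℝ)) ^ (ε / 4) := by gcongr
    _ = s ^ ε := by rw [← rpow_mul (by linarith)]; ring_nf

lemma exists_integral_le_integral_add {f g : ℝ → ℝ}
    (hf : ∀ a b, IntervalIntegrable f MeasureTheory.volume a b)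
    (hg : ∀ a b, IntervalIntegrable g MeasureTheory.volume a b) (hfg : f ≤ᶠ[atTop] g) (x₀ : ℝ) :
    ∃ d, ∀ᶠ x in atTop, ∫ s in x₀..x, f s ≤ (∫ s in x₀..x, g s) + d := by
  obtain ⟨M, hM⟩ := eventually_atTop.1 hfg
  refine ⟨(∫ s in x₀..M, f s) - ∫ s in x₀..M, g s, ?_⟩
  filter_upwards [eventually_ge_atTop M] with x hx
  have htail : ∫ s in M..x, f s ≤ ∫ s in M..x, g s :=
    intervalIntegral.integral_mono_on hx (hf M x) (hg M x) fun s hs => hM s hs.1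
  rw [← intervalIntegral.integral_add_adjacent_intervals (hf x₀ M) (hf M x),
    ← intervalIntegral.integral_add_adjacent_intervals (hg x₀ M) (hg M x)]
  linarith

noncomputable def nonlinearity (p a s : ℝ) : ℝ := |s| ^ (p - 1) * s * log (2 + s ^ 2) ^ a

lemma log_two_add_sq_pos (s : ℝ) : 0 < log (2 + s ^ 2) :=
  log_pos (by nlinarith [sq_nonneg s])

lemma continuous_nonlinearity {p : ℝ} (a : ℝ) (hp : 1 ≤ p) : Continuous (nonlinearity p a) := by
  have hlog : Continuous fun s : ℝ => log (2 + s ^ 2) :=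
    (by fun_prop : Continuous fun s : ℝ => 2 + s ^ 2).log fun s => by positivity
  exact ((continuous_abs.rpow_const fun _ => Or.inr (sub_nonneg.2 hp)).mul continuous_id).mul
    (hlog.rpow_const fun s => Or.inl (log_two_add_sq_pos s).ne')

lemma nonlinearity_of_pos (p a : ℝ) {s : ℝ} (hs : 0 < s) :
    nonlinearity p a s = s ^ p * log (2 + s ^ 2) ^ a := by
  rw [nonlinearity, abs_of_pos hs, rpow_sub_one hs.ne', div_mul_cancel₀ _ hs.ne']

lemma nonlinearity_pos (p a : ℝ) {s : ℝ} (hs : 0 < s) : 0 < nonlinearity p a s := by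
  have := log_two_add_sq_pos s
  rw [nonlinearity_of_pos p a hs]
  positivity

lemma eventually_rpow_le_nonlinearity {p k : ℝ} (a : ℝ) (hk : k < p) :
    ∀ᶠ s in atTop, s ^ k ≤ nonlinearity p a s := by
  filter_upwards [eventually_log_two_add_sq_rpow_le (-a) (sub_pos.2 hk), eventually_gt_atTop 0]
    with s hlog hs
  have hL := log_two_add_sq_pos s
  rw [rpow_neg hL.le, inv_le_iff_one_le_mul₀ (by positivity)] at hlog
  rw [nonlinearity_of_pos p a hs]
  calc s ^ k ≤ s ^ k * (s ^ (p - k) * log (2 + s ^ 2) ^ a) :=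
        le_mul_of_one_le_right (by positivity) hlog
    _ = s ^ p * log (2 + s ^ 2) ^ a := by rw [← mul_assoc, ← rpow_add hs, add_sub_cancel]

lemma eventually_nonlinearity_le_rpow {p k : ℝ} (a : ℝ) (hk : p < k) :
    ∀ᶠ s in atTop, nonlinearity p a s ≤ s ^ k := by
  filter_upwards [eventually_log_two_add_sq_rpow_le a (sub_pos.2 hk), eventually_gt_atTop 0]
    with s hlog hs
  rw [nonlinearity_of_pos p a hs]
  calc s ^ p * log (2 + s ^ 2) ^ a ≤ s ^ p * s ^ (k - p) := by gcongr
    _ = s ^ k := by rw [← rpow_add hs, add_sub_cancel]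

lemma eventually_rpow_le_add_two_mul_integral {p r : ℝ} (a c x₀ : ℝ) (hp : 1 ≤ p)
    (hr : r < p + 1) : ∀ᶠ x in atTop, x ^ r ≤ c + 2 * ∫ s in x₀..x, nonlinearity p a s := by
  obtain ⟨k, hk, hkp⟩ :=
    exists_between (max_lt (by linarith : r - 1 < p) (by linarith : -1 < p))
  have hk1 : -1 < k := (le_max_right _ _).trans_lt hk
  have hkr : r < k + 1 := by linarith [le_max_left (r - 1) (-1)]
  obtain ⟨d, hd⟩ := exists_integral_le_integral_add
    (fun _ _ => intervalIntegral.intervalIntegrable_rpow' hk1)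
    (fun _ _ => (continuous_nonlinearity a hp).intervalIntegrable _ _)
    (eventually_rpow_le_nonlinearity a hkp) x₀
  filter_upwards [hd, eventually_mul_rpow_add_le_mul_rpow (c := 2 / (k + 1)) 1
      (2 * x₀ ^ (k + 1) / (k + 1) + 2 * d - c) (div_pos two_pos (by linarith)) (by linarith) hkr]
    with x hx hpow
  rw [integral_rpow (Or.inl hk1)] at hx
  have hprim : 2 * ((x ^ (k + 1) - x₀ ^ (k + 1)) / (k + 1)) =
      2 / (k + 1) * x ^ (k + 1) - 2 * x₀ ^ (k + 1) / (k + 1) := by ring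
  linarith

lemma eventually_add_two_mul_integral_le_rpow {p r : ℝ} (a c x₀ : ℝ) (hp : 1 ≤ p)
    (hr : p + 1 < r) : ∀ᶠ x in atTop, c + 2 * ∫ s in x₀..x, nonlinearity p a s ≤ x ^ r := by
  obtain ⟨k, hpk, hk⟩ := exists_between (by linarith : p < r - 1)
  have hk1 : -1 < k := by linarith
  obtain ⟨d, hd⟩ := exists_integral_le_integral_add
    (fun _ _ => (continuous_nonlinearity a hp).intervalIntegrable _ _)
    (fun _ _ => intervalIntegral.intervalIntegrable_rpow' hk1)
    (eventually_nonlinearity_le_rpow a hpk) x₀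
  filter_upwards [hd, eventually_mul_rpow_add_le_mul_rpow (2 / (k + 1))
      (c - 2 * x₀ ^ (k + 1) / (k + 1) + 2 * d) one_pos (by linarith) (by linarith : k + 1 < r)]
    with x hx hpow
  rw [integral_rpow (Or.inl hk1)] at hx
  have hprim : 2 * ((x ^ (k + 1) - x₀ ^ (k + 1)) / (k + 1)) =
      2 / (k + 1) * x ^ (k + 1) - 2 * x₀ ^ (k + 1) / (k + 1) := by ring
  linarith

lemma eventually_nonneg_of_hasDerivAt_nonpos {w w' : ℝ → ℝ} {T : ℝ}
    (h : ∀ᶠ t in 𝓝[<] T, HasDerivAt w (w' t) t ∧ w' t ≤ 0)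
    (hw : Tendsto w (𝓝[<] T) (𝓝 0)) : ∀ᶠ t in 𝓝[<] T, 0 ≤ w t := by
  obtain ⟨l, hl, hsub⟩ := mem_nhdsLT_iff_exists_Ioo_subset.1 h
  have hanti : AntitoneOn w (Ioo l T) :=
    antitoneOn_of_hasDerivWithinAt_nonpos (convex_Ioo l T)
      (fun t ht => (hsub ht).1.continuousAt.continuousWithinAt)
      (fun t ht => (hsub (interior_subset ht)).1.hasDerivWithinAt)
      (fun t ht => (hsub (interior_subset ht)).2)
  filter_upwards [Ioo_mem_nhdsLT hl] with s hs
  refine le_of_tendsto hw ?_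
  filter_upwards [Ioo_mem_nhdsLT hs.2] with t ht
  exact hanti hs ⟨hs.1.trans ht.1, ht.2⟩ ht.1.le

lemma eventually_nonpos_of_hasDerivAt_nonneg {w w' : ℝ → ℝ} {T : ℝ}
    (h : ∀ᶠ t in 𝓝[<] T, HasDerivAt w (w' t) t ∧ 0 ≤ w' t)
    (hw : Tendsto w (𝓝[<] T) (𝓝 0)) : ∀ᶠ t in 𝓝[<] T, w t ≤ 0 := by
  have hneg := eventually_nonneg_of_hasDerivAt_nonpos (w := fun t => -w t)
    (w' := fun t => -w' t) (h.mono fun t ht => ⟨ht.1.neg, neg_nonpos.2 ht.2⟩)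
    (by simpa using hw.neg)
  simpa using hneg

lemma hasDerivAt_rpow_neg_inv_sub {v : ℝ → ℝ} {v' t T σ : ℝ} (hv : HasDerivAt v v' t)
    (ht : 0 < v t) (hσ : 0 < σ) :
    HasDerivAt (fun t => v t ^ (-σ⁻¹) - (T - t) / σ) (σ⁻¹ * (1 - v' / v t ^ (1 + σ⁻¹))) t := by
  refine ((hv.rpow_const (Or.inl ht.ne')).sub
    (((hasDerivAt_const t T).sub (hasDerivAt_id t)).div_const σ)).congr_deriv ?_
  rw [show -σ⁻¹ - 1 = -(1 + σ⁻¹) by ring, rpow_neg ht.le]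
  field_simp
  ring

lemma tendsto_rpow_neg_inv_sub {v : ℝ → ℝ} {T σ : ℝ} (hσ : 0 < σ)
    (hv : Tendsto v (𝓝[<] T) atTop) :
    Tendsto (fun t => v t ^ (-σ⁻¹) - (T - t) / σ) (𝓝[<] T) (𝓝 0) := by
  have hlin : Tendsto (fun t => (T - t) / σ) (𝓝[<] T) (𝓝 0) := by
    refine tendsto_nhdsWithin_of_tendsto_nhds ?_
    simpa using (by fun_prop : Continuous fun t : ℝ => (T - t) / σ).tendsto T
  simpa using ((tendsto_rpow_neg_atTop (inv_pos.2 hσ)).comp hv).sub hlin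

lemma mul_log_rpow_neg_inv {x : ℝ} (hx : 0 < x) {σ : ℝ} (hσ : σ ≠ 0) :
    σ * log (x ^ (-σ⁻¹)) = -log x := by
  rw [log_rpow hx]
  field_simp

lemma log_le_of_rpow_le_deriv {v v' : ℝ → ℝ} {T σ : ℝ} (hσ : 0 < σ)
    (hv : Tendsto v (𝓝[<] T) atTop)
    (h : ∀ᶠ t in 𝓝[<] T, HasDerivAt v (v' t) t ∧ v t ^ (1 + σ⁻¹) ≤ v' t) :
    ∀ᶠ t in 𝓝[<] T, log (v t) ≤ σ * (log σ - log (T - t)) := by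
  have hw : ∀ᶠ t in 𝓝[<] T, 0 ≤ v t ^ (-σ⁻¹) - (T - t) / σ := by
    refine eventually_nonneg_of_hasDerivAt_nonpos
      (w' := fun t => σ⁻¹ * (1 - v' t / v t ^ (1 + σ⁻¹))) ?_ (tendsto_rpow_neg_inv_sub hσ hv)
    filter_upwards [h, hv.eventually_gt_atTop 0] with t ⟨hd, hle⟩ hpos
    refine ⟨hasDerivAt_rpow_neg_inv_sub hd hpos hσ, ?_⟩
    have := (one_le_div (rpow_pos_of_pos hpos _)).2 hle
    nlinarith [inv_pos.2 hσ]
  filter_upwards [hw, hv.eventually_gt_atTop 0, self_mem_nhdsWithin] with t hw hpos ht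
  have hlog := log_le_log (div_pos (sub_pos.2 ht) hσ) (sub_nonneg.1 hw)
  rw [log_div (sub_pos.2 ht).ne' hσ.ne'] at hlog
  nlinarith [mul_log_rpow_neg_inv hpos hσ.ne']

lemma le_log_of_deriv_le_rpow {v v' : ℝ → ℝ} {T σ : ℝ} (hσ : 0 < σ)
    (hv : Tendsto v (𝓝[<] T) atTop)
    (h : ∀ᶠ t in 𝓝[<] T, HasDerivAt v (v' t) t ∧ v' t ≤ v t ^ (1 + σ⁻¹)) :
    ∀ᶠ t in 𝓝[<] T, σ * (log σ - log (T - t)) ≤ log (v t) := by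
  have hw : ∀ᶠ t in 𝓝[<] T, v t ^ (-σ⁻¹) - (T - t) / σ ≤ 0 := by
    refine eventually_nonpos_of_hasDerivAt_nonneg
      (w' := fun t => σ⁻¹ * (1 - v' t / v t ^ (1 + σ⁻¹))) ?_ (tendsto_rpow_neg_inv_sub hσ hv)
    filter_upwards [h, hv.eventually_gt_atTop 0] with t ⟨hd, hle⟩ hpos
    refine ⟨hasDerivAt_rpow_neg_inv_sub hd hpos hσ, ?_⟩
    have := (div_le_one (rpow_pos_of_pos hpos _)).2 hle
    nlinarith [inv_pos.2 hσ]
  filter_upwards [hw, hv.eventually_gt_atTop 0, self_mem_nhdsWithin] with t hw hpos ht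
  have hlog := log_le_log (rpow_pos_of_pos hpos _) (sub_nonpos.1 hw)
  rw [log_div (sub_pos.2 ht).ne' hσ.ne'] at hlog
  nlinarith [mul_log_rpow_neg_inv hpos hσ.ne']

lemma sq_rpow_eq_rpow_two_mul {x : ℝ} (hx : 0 ≤ x) (q : ℝ) : (x ^ q) ^ 2 = x ^ (2 * q) := by
  rw [← rpow_two, ← rpow_mul hx, mul_comm]

lemma sq_eq_sq_add_two_mul_integral {f v w : ℝ → ℝ} {t₀ T : ℝ} (hf : Continuous f)
    (hv : ∀ t ∈ Ico t₀ T, HasDerivAt v (w t) t)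
    (hw : ∀ t ∈ Ico t₀ T, HasDerivAt w (f (v t)) t) :
    ∀ t ∈ Ico t₀ T, w t ^ 2 = w t₀ ^ 2 + 2 * ∫ s in v t₀..v t, f s := by
  set E : ℝ → ℝ := fun t => w t ^ 2 - 2 * ∫ s in v t₀..v t, f s
  have hE : ∀ t ∈ Ico t₀ T, HasDerivAt E 0 t := fun t ht => by
    have hF := (hf.integral_hasStrictDerivAt (v t₀) (v t)).hasDerivAt.comp t (hv t ht)
    exact (((hw t ht).pow 2).sub (hF.const_mul 2)).congr_deriv (by push_cast; ring)
  intro t ht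
  have hconst := constant_of_has_deriv_right_zero (a := t₀) (b := t)
    (fun s hs => (hE s ⟨hs.1, hs.2.trans_lt ht.2⟩).continuousAt.continuousWithinAt)
    (fun s hs => (hE s ⟨hs.1, hs.2.trans ht.2⟩).hasDerivWithinAt) t ⟨ht.1, le_rfl⟩
  simp only [E, intervalIntegral.integral_same] at hconst
  linarith

lemma eventually_rpow_le_of_sq_eq {p a c x₀ q : ℝ} {l : Filter ℝ} {v w : ℝ → ℝ} (hp : 1 ≤ p)
    (hq : 2 * q < p + 1) (hv : Tendsto v l atTop)
    (hE : ∀ᶠ t in l, w t ^ 2 = c + 2 * ∫ s in x₀..v t, nonlinearity p a s)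
    (hw : ∀ᶠ t in l, 0 ≤ w t) : ∀ᶠ t in l, v t ^ q ≤ w t := by
  filter_upwards [hv.eventually (eventually_rpow_le_add_two_mul_integral a c x₀ hp hq), hE, hw,
    hv.eventually_gt_atTop 0] with t hlow hEt hwt hvt
  rw [← hEt, ← sq_rpow_eq_rpow_two_mul hvt.le] at hlow
  exact (sq_le_sq₀ (rpow_nonneg hvt.le q) hwt).1 hlow

lemma eventually_le_rpow_of_sq_eq {p a c x₀ q : ℝ} {l : Filter ℝ} {v w : ℝ → ℝ} (hp : 1 ≤ p)
    (hq : p + 1 < 2 * q) (hv : Tendsto v l atTop)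
    (hE : ∀ᶠ t in l, w t ^ 2 = c + 2 * ∫ s in x₀..v t, nonlinearity p a s) :
    ∀ᶠ t in l, w t ≤ v t ^ q := by
  filter_upwards [hv.eventually (eventually_add_two_mul_integral_le_rpow a c x₀ hp hq), hE,
    hv.eventually_gt_atTop 0] with t hup hEt hvt
  rw [← hEt, ← sq_rpow_eq_rpow_two_mul hvt.le] at hup
  exact (abs_le_of_sq_le_sq' hup (rpow_nonneg hvt.le q)).2

lemma tendsto_neg_log_sub_nhdsLT (T : ℝ) :
    Tendsto (fun t => -log (T - t)) (𝓝[<] T) atTop := by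
  have hsub : Tendsto (fun t => T - t) (𝓝[<] T) (𝓝[>] 0) := by
    refine tendsto_nhdsWithin_of_tendsto_nhds_of_eventually_within _ ?_ ?_
    · exact tendsto_nhdsWithin_of_tendsto_nhds
        (by simpa using (continuous_sub_left T).tendsto T)
    · filter_upwards [self_mem_nhdsWithin] with t ht using sub_pos.2 (mem_Iio.1 ht)
  exact tendsto_neg_atBot_atTop.comp (tendsto_log_nhdsGT_zero.comp hsub)

lemma tendsto_mul_sub_log_div_neg_log (T σ b : ℝ) :
    Tendsto (fun t => σ * (b - log (T - t)) / -log (T - t)) (𝓝[<] T) (𝓝 σ) := by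
  have hy := tendsto_neg_log_sub_nhdsLT T
  have hlim : Tendsto (fun t => σ * (b / -log (T - t) + 1)) (𝓝[<] T) (𝓝 (σ * (0 + 1))) :=
    ((tendsto_const_nhds.div_atTop hy).add_const 1).const_mul σ
  rw [zero_add, mul_one] at hlim
  refine hlim.congr' ?_
  filter_upwards [hy.eventually_gt_atTop 0] with t ht
  have : log (T - t) ≠ 0 := by linarith
  field_simp
  ring

lemma tendsto_log_div_neg_log_sub {p a c x₀ T : ℝ} {v w : ℝ → ℝ} (hp : 1 < p)
    (hv : Tendsto v (𝓝[<] T) atTop) (hderiv : ∀ᶠ t in 𝓝[<] T, HasDerivAt v (w t) t)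
    (hE : ∀ᶠ t in 𝓝[<] T, w t ^ 2 = c + 2 * ∫ s in x₀..v t, nonlinearity p a s)
    (hw : ∀ᶠ t in 𝓝[<] T, 0 ≤ w t) :
    Tendsto (fun t => log (v t) / -log (T - t)) (𝓝[<] T) (𝓝 (2 / (p - 1))) := by
  have hp1 : 0 < p - 1 := by linarith
  have hy := tendsto_neg_log_sub_nhdsLT T
  rw [tendsto_order]
  refine ⟨fun c' hc' => ?_, fun c' hc' => ?_⟩
  · obtain ⟨σ, hσc, hσ⟩ := exists_between (max_lt hc' (by positivity : 0 < 2 / (p - 1)))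
    have hσ0 : 0 < σ := (le_max_right _ _).trans_lt hσc
    have hq : p + 1 < 2 * (1 + σ⁻¹) := by
      have : (p - 1) / 2 < σ⁻¹ := by rwa [lt_inv_comm₀ (by positivity) hσ0, inv_div]
      linarith
    filter_upwards [le_log_of_deriv_le_rpow hσ0 hv
        (hderiv.and (eventually_le_rpow_of_sq_eq hp.le hq hv hE)),
      (tendsto_mul_sub_log_div_neg_log T σ (log σ)).eventually
        (lt_mem_nhds ((le_max_left _ _).trans_lt hσc)),
      hy.eventually_gt_atTop 0] with t hlog hlt hyt
    exact hlt.trans_le (div_le_div_of_nonneg_right hlog hyt.le)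
  · obtain ⟨σ, hσc, hσ⟩ := exists_between hc'
    have hσ0 : 0 < σ := lt_trans (by positivity) hσc
    have hq : 2 * (1 + σ⁻¹) < p + 1 := by
      have : σ⁻¹ < (p - 1) / 2 := by rwa [inv_lt_comm₀ hσ0 (by positivity), inv_div]
      linarith
    filter_upwards [log_le_of_rpow_le_deriv hσ0 hv
        (hderiv.and (eventually_rpow_le_of_sq_eq hp.le hq hv hE hw)),
      (tendsto_mul_sub_log_div_neg_log T σ (log σ)).eventually (gt_mem_nhds hσ),
      hy.eventually_gt_atTop 0] with t hlog hlt hyt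
    exact (div_le_div_of_nonneg_right hlog hyt.le).trans_lt hlt

lemma tendsto_log_sq_add_two_div_log :
    Tendsto (fun x => log (x ^ 2 + 2) / log x) atTop (𝓝 2) := by
  have hcorr : Tendsto (fun x : ℝ => log (1 + 2 / x ^ 2)) atTop (𝓝 0) := by
    have h : Tendsto (fun x : ℝ => 1 + 2 / x ^ 2) atTop (𝓝 1) := by
      simpa using (tendsto_const_nhds (x := (2 : ℝ))).div_atTop
        (tendsto_pow_atTop two_ne_zero) |>.const_add 1
    simpa [Function.comp_def] using (continuousAt_log one_ne_zero).tendsto.comp h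
  have hlim := (hcorr.div_atTop tendsto_log_atTop).const_add 2
  rw [add_zero] at hlim
  refine hlim.congr' ?_
  filter_upwards [eventually_gt_atTop 1] with x hx
  have hx0 : 0 < x := by linarith
  have hlogx : 0 < log x := log_pos hx
  rw [show x ^ 2 + 2 = x ^ 2 * (1 + 2 / x ^ 2) by field_simp, log_mul (by positivity)
    (by positivity), log_pow]
  field_simp
  push_cast
  ring

theorem stmt12_general (p a B T : ℝ) (hp : 1 < p) (hB : 0 < B) (hT : 0 < T)
    (v : ℝ → ℝ) (hv0' : deriv v 0 = B)
    (hpos : ∀ t ∈ Ico (0:ℝ) T, 0 < v t)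
    (hv : ∀ t ∈ Ico (0:ℝ) T, HasDerivAt v (deriv v t) t)
    (hv' : ∀ t ∈ Ico (0:ℝ) T,
      HasDerivAt (deriv v) (|v t| ^ (p - 1) * v t * (Real.log (2 + (v t) ^ 2)) ^ a) t)
    (hblow : Tendsto v (nhdsWithin T (Iio T)) atTop) :
    Tendsto (fun t : ℝ =>
        Real.log ((v t) ^ 2 + 2) / (-(4 / (p - 1)) * Real.log (T - t)))
      (nhdsWithin T (Iio T)) (nhds 1) := by
  have hp1 : p - 1 ≠ 0 := by linarith
  have hI : Ico 0 T ∈ 𝓝[<] T := Ico_mem_nhdsLT hT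
  have hE := sq_eq_sq_add_two_mul_integral (continuous_nonlinearity a hp.le) hv hv'
  have hmono : MonotoneOn (deriv v) (Ico 0 T) :=
    monotoneOn_of_hasDerivWithinAt_nonneg (convex_Ico 0 T)
      (fun t ht => (hv' t ht).continuousAt.continuousWithinAt)
      (fun t ht => (hv' t (interior_subset ht)).hasDerivWithinAt)
      (fun t ht => (nonlinearity_pos p a (hpos t (interior_subset ht))).le)
  have hrate := tendsto_log_div_neg_log_sub hp hblow (mem_of_superset hI hv)
    (mem_of_superset hI hE)
    (mem_of_superset hI fun t ht => hB.le.trans (hv0' ▸ hmono ⟨le_rfl, hT⟩ ht ht.1))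
  have hlim := ((tendsto_log_sq_add_two_div_log.comp hblow).mul hrate).const_mul ((p - 1) / 4)
  rw [show (p - 1) / 4 * (2 * (2 / (p - 1))) = 1 by field_simp; norm_num] at hlim
  refine hlim.congr' ?_
  filter_upwards [hblow.eventually_gt_atTop 1,
    (tendsto_neg_log_sub_nhdsLT T).eventually_gt_atTop 0] with t hvt hy
  have := log_pos hvt
  simp only [Function.comp_apply]
  field_simp

theorem stmt12 (p a A B T : ℝ) (hp : 1 < p) (hA : 0 < A) (hB : 0 < B) (hT : 0 < T)
    (v : ℝ → ℝ) (hv0 : v 0 = A) (hv0' : deriv v 0 = B)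
    (hpos : ∀ t ∈ Ico (0:ℝ) T, 0 < v t)
    (hv : ∀ t ∈ Ico (0:ℝ) T, HasDerivAt v (deriv v t) t)
    (hv' : ∀ t ∈ Ico (0:ℝ) T,
      HasDerivAt (deriv v) (|v t| ^ (p - 1) * v t * (Real.log (2 + (v t) ^ 2)) ^ a) t)
    (hblow : Tendsto v (nhdsWithin T (Iio T)) atTop) :
    Tendsto (fun t : ℝ =>
        Real.log ((v t) ^ 2 + 2) / (-(4 / (p - 1)) * Real.log (T - t)))
      (nhdsWithin T (Iio T)) (nhds 1) :=
  stmt12_general p a B T hp hB hT v hv0' hpos hv hv' hblow
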